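/- arXiv:2406.19716 — 2 statements merged into one kernel-verified Lean document; each statement's English description precedes it below -/
import Mathlib

section
/- Let f_T : ℝ → [0, ∞) be a probability density with respect to Lebesgue measure, S_C : ℝ → [0, 1] measurable with ∫ S_C(u) f_T(u) du > 0, and g : ℝ → (0, ∞) measurable. Assume ∫ g(u) S_C(u) 1{f_T(u) > 0} du < ∫ f_T(u) S_C(u) du, that u ↦ g(u) S_C(u) 1{f_T(u) > 0} is Lebesgue-integrable, and that u ↦ log(g(u)/f_T(u)) S_C(u) f_T(u) is Lebesgue-integrable (with the convention 0/0 = 0). Then ∫ log( g(u) / f_T(u) ) S_C(u) f_T(u) du < 0. -/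
open MeasureTheory

/-- Inequality (3) of Appendix A: if `fT` is a probability density with respect to
Lebesgue measure, `S_C : ℝ → [0,1]` is measurable with `∫ S_C fT > 0`, `g > 0`
measurable, `∫ g S_C 1{fT > 0} < ∫ fT S_C`, and the displayed integrands are
integrable, then `∫ log(g/fT) S_C fT < 0`. -/
theorem stmt_6
    (fT SC g : ℝ → ℝ)
    (hfT_meas : Measurable fT) (hfT_nonneg : ∀ u, 0 ≤ fT u)
    (hfT_int : Integrable fT) (hfT_one : ∫ u, fT u = 1)
    (hSC_meas : Measurable SC) (hSC0 : ∀ u, 0 ≤ SC u) (hSC1 : ∀ u, SC u ≤ 1)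
    (hSCfT_pos : 0 < ∫ u, SC u * fT u)
    (hg_meas : Measurable g) (hg_pos : ∀ u, 0 < g u)
    (hgSC_int :
      Integrable (fun u => Set.indicator {u | 0 < fT u} (fun u => g u * SC u) u))
    (hsub :
      (∫ u, Set.indicator {u | 0 < fT u} (fun u => g u * SC u) u) <
        ∫ u, fT u * SC u)
    (hlog_int :
      Integrable (fun u => Real.log (g u / fT u) * SC u * fT u)) :
    (∫ u, Real.log (g u / fT u) * SC u * fT u) < 0 := by
  have hint2 : Integrable (fun u => fT u * SC u) := by
    refine hfT_int.mono' (hfT_meas.mul hSC_meas).aestronglyMeasurable ?_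
    filter_upwards with u
    rw [Real.norm_eq_abs, abs_of_nonneg (mul_nonneg (hfT_nonneg u) (hSC0 u))]
    calc fT u * SC u ≤ fT u * 1 := mul_le_mul_of_nonneg_left (hSC1 u) (hfT_nonneg u)
      _ = fT u := mul_one _
  have hmono : (∫ u, Real.log (g u / fT u) * SC u * fT u) ≤
      ∫ u, (Set.indicator {u | 0 < fT u} (fun u => g u * SC u) u - fT u * SC u) := by
    apply integral_mono hlog_int (hgSC_int.sub hint2)
    intro u
    simp only [Pi.sub_apply]
    by_cases h : 0 < fT u
    · have hx : 0 < g u / fT u := div_pos (hg_pos u) h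
      have hlog := Real.log_le_sub_one_of_pos hx
      have hmem : u ∈ {u | 0 < fT u} := h
      rw [Set.indicator_of_mem hmem]
      have hnn : 0 ≤ SC u * fT u := mul_nonneg (hSC0 u) (hfT_nonneg u)
      have h1 := mul_le_mul_of_nonneg_right hlog hnn
      have h2 : (g u / fT u - 1) * (SC u * fT u) = g u * SC u - fT u * SC u := by
        field_simp
      calc Real.log (g u / fT u) * SC u * fT u
          = Real.log (g u / fT u) * (SC u * fT u) := by ring
        _ ≤ (g u / fT u - 1) * (SC u * fT u) := h1
        _ = g u * SC u - fT u * SC u := h2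
    · have h0 : fT u = 0 := le_antisymm (not_lt.mp h) (hfT_nonneg u)
      rw [Set.indicator_of_notMem (s := {u | 0 < fT u}) (f := fun u => g u * SC u) h]
      simp [h0]
  refine lt_of_le_of_lt hmono ?_
  rw [integral_sub hgSC_int hint2]
  linarith
end

section
/- Let μ be a finite measure on ℝ, let M > 0, and let F : [−M, M] → ℝ be continuous and strictly increasing. Let h₀ and h₁, h₂, … be measurable functions from ℝ into [−M, M]. If ∫ | F(hₙ(u)) − F(h₀(u)) | dμ(u) → 0 as n → ∞, then ∫ ( hₙ(u) − h₀(u) )² dμ(u) → 0 as n → ∞. -/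
/-!
A continuous injective map on a compact set is uniformly separating: points at distance `≥ ε`
have images at distance `≥ δ(ε) > 0`. Hence `L¹`-convergence of `F ∘ hₙ` to `F ∘ h₀`, which
gives convergence in measure, forces `hₙ → h₀` in measure. Since everything takes values in
`[-M, M]`, dominated convergence along a.e.-convergent subsequences upgrades this to
convergence of `∫ (hₙ - h₀)²`.
-/

open MeasureTheory Filter Topology Set

theorem ContinuousOn.measurable_comp_of_forall_mem {α X Y : Type*} [MeasurableSpace α]
    [TopologicalSpace X] [MeasurableSpace X] [OpensMeasurableSpace X]
    [TopologicalSpace Y] [MeasurableSpace Y] [BorelSpace Y]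
    {s : Set X} {F : X → Y} (hF : ContinuousOn F s) {f : α → X} (hf : Measurable f)
    (hfs : ∀ a, f a ∈ s) : Measurable fun a => F (f a) :=
  hF.domRestrict.measurable.comp (hf.subtype_mk (h := hfs))

theorem IsCompact.exists_pos_le_dist_of_injOn {X Y : Type*} [PseudoMetricSpace X] [MetricSpace Y]
    {s : Set X} {F : X → Y} (hs : IsCompact s) (hF : ContinuousOn F s) (hinj : InjOn F s)
    {ε : ℝ} (hε : 0 < ε) :
    ∃ δ > 0, ∀ x ∈ s, ∀ y ∈ s, ε ≤ dist x y → δ ≤ dist (F x) (F y) := by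
  set K : Set (X × X) := (s ×ˢ s) ∩ {p | ε ≤ dist p.1 p.2}
  have hK : IsCompact K := (hs.prod hs).inter_right
    (isClosed_le continuous_const continuous_dist)
  have hpos : ∀ p ∈ K, 0 < dist (F p.1) (F p.2) := fun p ⟨⟨h₁, h₂⟩, hp⟩ =>
    dist_pos.2 fun heq => (hε.trans_le hp).ne' (by rw [hinj h₁ h₂ heq, dist_self])
  have hcont : ContinuousOn (fun p : X × X => dist (F p.1) (F p.2)) K :=
    continuous_dist.comp_continuousOn <|
      (hF.comp continuousOn_fst fun _ hp => hp.1.1).prodMk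
        (hF.comp continuousOn_snd fun _ hp => hp.1.2)
  obtain ⟨δ, hδ, hδK⟩ := hK.exists_forall_le' hcont hpos
  exact ⟨δ, hδ, fun x hx y hy hxy => hδK (x, y) ⟨⟨hx, hy⟩, hxy⟩⟩

namespace MeasureTheory

variable {α ι E : Type*} {m : MeasurableSpace α} {μ : Measure α} {l : Filter ι}

theorem TendstoInMeasure.of_comp_of_isCompact {X Y : Type*} [PseudoMetricSpace X]
    [MetricSpace Y] {s : Set X} {F : X → Y} (hs : IsCompact s) (hF : ContinuousOn F s)
    (hinj : InjOn F s) {f : ι → α → X} {g : α → X} (hf : ∀ i a, f i a ∈ s) (hg : ∀ a, g a ∈ s)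
    (hFfg : TendstoInMeasure μ (fun i a => F (f i a)) l fun a => F (g a)) :
    TendstoInMeasure μ f l g := by
  rw [tendstoInMeasure_iff_dist] at hFfg ⊢
  intro ε hε
  obtain ⟨δ, hδ, hsep⟩ := hs.exists_pos_le_dist_of_injOn hF hinj hε
  refine tendsto_of_tendsto_of_tendsto_of_le_of_le tendsto_const_nhds (hFfg δ hδ)
    (fun _ => zero_le) fun i => measure_mono fun a ha => ?_
  exact hsep _ (hf i a) _ (hg a) ha

theorem tendstoInMeasure_of_tendsto_integral_norm_sub [NormedAddCommGroup E]
    {f : ι → α → E} {g : α → E} (hf : ∀ i, AEStronglyMeasurable (f i) μ)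
    (hg : AEStronglyMeasurable g μ) (hfg : ∀ i, Integrable (f i - g) μ)
    (hlim : Tendsto (fun i => ∫ a, ‖f i a - g a‖ ∂μ) l (𝓝 0)) :
    TendstoInMeasure μ f l g := by
  refine tendstoInMeasure_of_tendsto_eLpNorm one_ne_zero hf hg ?_
  have heq : ∀ i, eLpNorm (f i - g) 1 μ = ENNReal.ofReal (∫ a, ‖f i a - g a‖ ∂μ) := fun i => by
    rw [eLpNorm_one_eq_lintegral_enorm, ← ofReal_integral_norm_eq_lintegral_enorm (hfg i)]
    rfl
  simpa only [heq, ENNReal.ofReal_zero, Function.comp_def] using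
    (ENNReal.continuous_ofReal.tendsto 0).comp hlim

theorem tendsto_integral_comp_of_tendstoInMeasure [NormedAddCommGroup E] {G : Type*}
    [NormedAddCommGroup G] [NormedSpace ℝ G] {Φ : E → G} (hΦ : Continuous Φ)
    {f : ℕ → α → E} {g : α → E} (hfg : TendstoInMeasure μ f atTop g)
    (hmeas : ∀ n, AEStronglyMeasurable (fun a => Φ (f n a)) μ) {bound : α → ℝ}
    (hbound : Integrable bound μ) (h_le : ∀ n, ∀ᵐ a ∂μ, ‖Φ (f n a)‖ ≤ bound a) :
    Tendsto (fun n => ∫ a, Φ (f n a) ∂μ) atTop (𝓝 (∫ a, Φ (g a) ∂μ)) := by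
  refine tendsto_of_subseq_tendsto fun ns hns => ?_
  obtain ⟨ms, -, hae⟩ := (hfg.comp hns).exists_seq_tendsto_ae
  refine ⟨ms, tendsto_integral_of_dominated_convergence bound (fun n => hmeas _) hbound
    (fun n => h_le _) ?_⟩
  filter_upwards [hae] with a ha
  exact (hΦ.tendsto _).comp ha

end MeasureTheory

theorem stmt_9_general
    (μ : Measure ℝ) [IsFiniteMeasure μ]
    (M : ℝ)
    (F : ℝ → ℝ)
    (hF_cont : ContinuousOn F (Set.Icc (-M) M))
    (hF_mono : StrictMonoOn F (Set.Icc (-M) M))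
    (h₀ : ℝ → ℝ) (h : ℕ → ℝ → ℝ)
    (h₀_meas : Measurable h₀) (h_meas : ∀ n, Measurable (h n))
    (h₀_mem : ∀ u, h₀ u ∈ Set.Icc (-M) M)
    (h_mem : ∀ n u, h n u ∈ Set.Icc (-M) M)
    (hconv :
      Tendsto (fun n => ∫ u, |F (h n u) - F (h₀ u)| ∂μ) atTop (nhds 0)) :
    Tendsto (fun n => ∫ u, (h n u - h₀ u) ^ 2 ∂μ) atTop (nhds 0) := by
  have hFh_meas n := hF_cont.measurable_comp_of_forall_mem (h_meas n) (h_mem n)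
  have hFh₀_meas := hF_cont.measurable_comp_of_forall_mem h₀_meas h₀_mem
  obtain ⟨C, hC⟩ := isCompact_Icc.exists_bound_of_continuousOn hF_cont
  have hint n : Integrable ((fun u => F (h n u)) - fun u => F (h₀ u)) μ :=
    .of_bound ((hFh_meas n).sub hFh₀_meas).aestronglyMeasurable (C + C) <| ae_of_all _ fun u =>
      (norm_sub_le _ _).trans (add_le_add (hC _ (h_mem n u)) (hC _ (h₀_mem u)))
  have hFh_tendsto : TendstoInMeasure μ (fun n u => F (h n u)) atTop fun u => F (h₀ u) :=
    tendstoInMeasure_of_tendsto_integral_norm_sub (fun n => (hFh_meas n).aestronglyMeasurable)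
      hFh₀_meas.aestronglyMeasurable hint (by simpa only [Real.norm_eq_abs] using hconv)
  have hh_tendsto : TendstoInMeasure μ h atTop h₀ :=
    .of_comp_of_isCompact isCompact_Icc hF_cont hF_mono.injOn h_mem h₀_mem hFh_tendsto
  have hsub_tendsto : TendstoInMeasure μ (fun n u => h n u - h₀ u) atTop 0 := by
    rw [tendstoInMeasure_iff_norm] at hh_tendsto ⊢
    simpa only [Pi.zero_apply, sub_zero] using hh_tendsto
  have hsq_le n : ∀ᵐ u ∂μ, ‖(h n u - h₀ u) ^ 2‖ ≤ (M + M) ^ 2 := ae_of_all _ fun u => by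
    obtain ⟨h₁, h₂⟩ := h_mem n u
    obtain ⟨h₃, h₄⟩ := h₀_mem u
    rw [Real.norm_eq_abs, abs_of_nonneg (sq_nonneg _)]
    nlinarith
  simpa using tendsto_integral_comp_of_tendstoInMeasure (continuous_pow 2) hsub_tendsto
    (fun n => (((h_meas n).sub h₀_meas).pow_const 2).aestronglyMeasurable)
    (integrable_const _) hsq_le

/-- Reduction step in Appendix A: let `μ` be a finite measure on `ℝ`, `M > 0`, and
`F` continuous and strictly increasing on `[−M, M]`. If `h₀` and `hₙ` are measurable
functions with values in `[−M, M]` and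
`∫ |F (hₙ u) − F (h₀ u)| dμ → 0`, then `∫ (hₙ u − h₀ u)² dμ → 0`. -/
theorem stmt_9
    (μ : Measure ℝ) [IsFiniteMeasure μ]
    (M : ℝ) (hM : 0 < M)
    (F : ℝ → ℝ)
    (hF_cont : ContinuousOn F (Set.Icc (-M) M))
    (hF_mono : StrictMonoOn F (Set.Icc (-M) M))
    (h₀ : ℝ → ℝ) (h : ℕ → ℝ → ℝ)
    (h₀_meas : Measurable h₀) (h_meas : ∀ n, Measurable (h n))
    (h₀_mem : ∀ u, h₀ u ∈ Set.Icc (-M) M)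
    (h_mem : ∀ n u, h n u ∈ Set.Icc (-M) M)
    (hconv :
      Tendsto (fun n => ∫ u, |F (h n u) - F (h₀ u)| ∂μ) atTop (nhds 0)) :
    Tendsto (fun n => ∫ u, (h n u - h₀ u) ^ 2 ∂μ) atTop (nhds 0) :=
  stmt_9_general μ M F hF_cont hF_mono h₀ h h₀_meas h_meas h₀_mem h_mem hconv
end
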